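/- arXiv:1909.09939 — 3 statements merged into one kernel-verified Lean document; each statement's English description precedes it below -/
import Mathlib

section
/- If a differentiable function V : [t0, t1) → ℝ≥0 satisfies V(t0) = 0 and V'(t) ≤ 2λ V(t) + d̄ √(2 V(t)) for all t ∈ [t0, t1), with λ, d̄ > 0, then V(t) ≤ ( (d̄ √2)/(2λ) (exp(λ (t - t0)) - 1) )² for all t ∈ [t0, t1). -/
/-!
Since `√(2V)` is not differentiable where `V` vanishes, work with `W = √(V + δ²)` for `δ > 0`.
The differential inequality turns into the linear one `W' ≤ λ W + d̄ √2 / 2`, so Grönwall's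
inequality bounds `W`, hence `√V`, by `δ e^{λ(t - t₀)} + d̄ √2 / (2λ) (e^{λ(t - t₀)} - 1)`;
letting `δ → 0` and squaring gives the claim.
-/

open Set Filter Topology Real

theorem gronwallBound_continuous_δ (K ε x : ℝ) : Continuous fun δ => gronwallBound δ K ε x := by
  by_cases hK : K = 0
  · simp only [gronwallBound_K0, hK]
    fun_prop
  · simp only [gronwallBound_of_K_ne_0 hK]
    fun_prop

theorem div_two_mul_sqrt_add_sq_le {v v' lam b δ : ℝ} (hv : 0 ≤ v) (hδ : δ ≠ 0)
    (hlam : 0 ≤ lam) (hb : 0 ≤ b) (h : v' ≤ 2 * lam * v + b * √v) :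
    v' / (2 * √(v + δ ^ 2)) ≤ lam * √(v + δ ^ 2) + b / 2 := by
  set w := √(v + δ ^ 2)
  have hpos : 0 < v + δ ^ 2 := by positivity
  have hw : 0 < w := sqrt_pos.2 hpos
  have hw_sq : w ^ 2 = v + δ ^ 2 := sq_sqrt hpos.le
  have hv_le : v ≤ w ^ 2 := by rw [hw_sq]; nlinarith [sq_nonneg δ]
  have hsqrt_le : √v ≤ w := sqrt_le_sqrt (by linarith [sq_nonneg δ])
  rw [div_le_iff₀ (by positivity)]
  calc v' ≤ 2 * lam * v + b * √v := h
    _ ≤ 2 * lam * w ^ 2 + b * w := by gcongr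
    _ = (lam * w + b / 2) * (2 * w) := by ring

section Comparison

variable {V V' : ℝ → ℝ} {a t lam b : ℝ}

theorem sqrt_add_sq_le_gronwallBound {δ : ℝ} (hδ : δ ≠ 0) (hlam : 0 ≤ lam) (hb : 0 ≤ b)
    (hnn : ∀ s ∈ Icc a t, 0 ≤ V s) (hder : ∀ s ∈ Icc a t, HasDerivAt V (V' s) s)
    (hbound : ∀ s ∈ Ico a t, V' s ≤ 2 * lam * V s + b * √(V s)) (hat : a ≤ t) :
    √(V t + δ ^ 2) ≤ gronwallBound √(V a + δ ^ 2) lam (b / 2) (t - a) := by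
  have hW : ∀ s ∈ Icc a t,
      HasDerivAt (fun u => √(V u + δ ^ 2)) (V' s / (2 * √(V s + δ ^ 2))) s := fun s hs =>
    ((hder s hs).add_const _).sqrt (by have := hnn s hs; positivity)
  exact le_gronwallBound_of_liminf_deriv_right_le
    (fun s hs => (hW s hs).continuousAt.continuousWithinAt)
    (fun s hs _ hr => (hW s (Ico_subset_Icc_self hs)).hasDerivWithinAt.liminf_right_slope_le hr)
    le_rfl
    (fun s hs => div_two_mul_sqrt_add_sq_le (hnn s (Ico_subset_Icc_self hs)) hδ hlam hb
      (hbound s hs))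
    t ⟨hat, le_rfl⟩

theorem sqrt_le_gronwallBound_of_deriv_le (hlam : 0 ≤ lam) (hb : 0 ≤ b)
    (hnn : ∀ s ∈ Icc a t, 0 ≤ V s) (hder : ∀ s ∈ Icc a t, HasDerivAt V (V' s) s)
    (hbound : ∀ s ∈ Ico a t, V' s ≤ 2 * lam * V s + b * √(V s)) (hat : a ≤ t) :
    √(V t) ≤ gronwallBound √(V a) lam (b / 2) (t - a) := by
  have hlim : Tendsto (fun δ => gronwallBound √(V a + δ ^ 2) lam (b / 2) (t - a)) (𝓝[>] 0)
      (𝓝 (gronwallBound √(V a) lam (b / 2) (t - a))) := by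
    have hcont : Continuous fun δ => gronwallBound √(V a + δ ^ 2) lam (b / 2) (t - a) :=
      (gronwallBound_continuous_δ _ _ _).comp (by fun_prop)
    simpa using hcont.tendsto 0 |>.mono_left nhdsWithin_le_nhds
  refine ge_of_tendsto hlim (eventually_mem_nhdsWithin.mono fun δ (hδ : 0 < δ) => ?_)
  calc √(V t) ≤ √(V t + δ ^ 2) := sqrt_le_sqrt (by nlinarith)
    _ ≤ _ := sqrt_add_sq_le_gronwallBound hδ.ne' hlam hb hnn hder hbound hat

end Comparison

theorem stmt_0 (t0 t1 lam dbar : ℝ) (hlam : 0 < lam) (hdbar : 0 < dbar)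
    (V V' : ℝ → ℝ)
    (hnn : ∀ t ∈ Set.Ico t0 t1, 0 ≤ V t)
    (hder : ∀ t ∈ Set.Ico t0 t1, HasDerivAt V (V' t) t)
    (h0 : V t0 = 0)
    (hbound : ∀ t ∈ Set.Ico t0 t1,
      V' t ≤ 2 * lam * V t + dbar * Real.sqrt (2 * V t)) :
    ∀ t ∈ Set.Ico t0 t1,
      V t ≤ ((dbar * Real.sqrt 2) / (2 * lam) * (Real.exp (lam * (t - t0)) - 1)) ^ 2 := by
  intro t ⟨ht0, ht1⟩
  have hsub : Icc t0 t ⊆ Ico t0 t1 := Icc_subset_Ico_right ht1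
  have hbound' : ∀ s ∈ Ico t0 t, V' s ≤ 2 * lam * V s + dbar * √2 * √(V s) := fun s hs => by
    simpa only [sqrt_mul zero_le_two, mul_assoc] using hbound s (hsub (Ico_subset_Icc_self hs))
  have hsqrt := sqrt_le_gronwallBound_of_deriv_le hlam.le (by positivity)
    (fun s hs => hnn s (hsub hs)) (fun s hs => hder s (hsub hs)) hbound' ht0
  rw [h0, sqrt_zero, gronwallBound_of_K_ne_0 hlam.ne'] at hsqrt
  refine (sqrt_le_iff.1 (hsqrt.trans_eq ?_)).2
  simp only [zero_mul, zero_add, div_div, mul_comm 2 lam]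
end

section
/- Suppose e : [t0, t1) → ℝ^m satisfies e(t0) = 0, e'(t) = A e(t) - d(t) with ‖d(t)‖ ≤ d̄, λ = λ_max(A) > 0 the maximum singular value of A, and t1 - t0 ≤ (1/λ) ln(λ V_T/d̄ + 1) for some V_T > 0. Then ‖e(t)‖ ≤ V_T for all t ∈ [t0, t1). -/
theorem stmt_3 (m : ℕ) (t0 t1 lam dbar VT : ℝ) (hlam : 0 < lam) (hdbar : 0 < dbar)
    (hVT : 0 < VT)
    (A : EuclideanSpace ℝ (Fin m) →L[ℝ] EuclideanSpace ℝ (Fin m))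
    (hA : ∀ x, ‖A x‖ ≤ lam * ‖x‖)
    (e d : ℝ → EuclideanSpace ℝ (Fin m))
    (hd : ∀ t ∈ Set.Ico t0 t1, ‖d t‖ ≤ dbar)
    (h0 : e t0 = 0)
    (hder : ∀ t ∈ Set.Ico t0 t1, HasDerivAt e (A (e t) - d t) t)
    (hdwell : t1 - t0 ≤ 1 / lam * Real.log (lam * VT / dbar + 1)) :
    ∀ t ∈ Set.Ico t0 t1, ‖e t‖ ≤ VT := by
  intro t ht
  obtain ⟨ht0, ht1⟩ := ht
  have hsub : Set.Icc t0 t ⊆ Set.Ico t0 t1 := fun x hx => ⟨hx.1, lt_of_le_of_lt hx.2 ht1⟩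
  have hcont : ContinuousOn e (Set.Icc t0 t) := fun x hx =>
    ((hder x (hsub hx)).continuousAt).continuousWithinAt
  have key := norm_le_gronwallBound_of_norm_deriv_right_le (a := t0) (b := t)
      (f := e) (f' := fun x => A (e x) - d x) (δ := 0) (K := lam) (ε := dbar)
      hcont
      (fun x hx => ((hder x (hsub ⟨hx.1, hx.2.le⟩)).hasDerivWithinAt))
      (by simp [h0])
      (fun x hx => by
        have := hsub ⟨hx.1, hx.2.le⟩
        calc ‖A (e x) - d x‖ ≤ ‖A (e x)‖ + ‖d x‖ := norm_sub_le _ _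
          _ ≤ lam * ‖e x‖ + dbar := add_le_add (hA _) (hd x this))
      t ⟨ht0, le_refl t⟩
  rw [gronwallBound_of_K_ne_0 hlam.ne'] at key
  simp only [zero_mul, zero_add] at key
  refine key.trans ?_
  -- dbar / lam * (exp (lam * (t - t0)) - 1) ≤ VT
  have harg : 0 < lam * VT / dbar + 1 := by positivity
  have hexp : Real.exp (lam * (t - t0)) ≤ lam * VT / dbar + 1 := by
    have h1 : lam * (t - t0) ≤ Real.log (lam * VT / dbar + 1) := by
      have : t - t0 ≤ 1 / lam * Real.log (lam * VT / dbar + 1) :=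
        le_trans (by linarith) hdwell
      calc lam * (t - t0) ≤ lam * (1 / lam * Real.log (lam * VT / dbar + 1)) :=
            mul_le_mul_of_nonneg_left this hlam.le
        _ = Real.log (lam * VT / dbar + 1) := by field_simp
    calc Real.exp (lam * (t - t0)) ≤ Real.exp (Real.log (lam * VT / dbar + 1)) :=
          Real.exp_le_exp.2 h1
      _ = lam * VT / dbar + 1 := Real.exp_log harg
  have : dbar / lam * (Real.exp (lam * (t - t0)) - 1) ≤ dbar / lam * (lam * VT / dbar) := by
    apply mul_le_mul_of_nonneg_left _ (by positivity)
    linarith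
  refine this.trans (le_of_eq ?_)
  field_simp
end

section
/- Let {t_s}_{s∈ℕ} be an increasing sequence of times with t_0 = 0 and sup_s t_s = ∞, and let e : [0, ∞) → ℝ^m be a function that on each interval [t_s, t_{s+1}) is differentiable with e(t_s) = 0 and e'(t) = A e(t) - d(t), where ‖d(t)‖ ≤ d̄ and λ = λ_max(A) > 0. If t_{s+1} - t_s ≤ (1/λ) ln(λ V_T/d̄ + 1) for all s, then ‖e(t)‖ ≤ V_T for all t ≥ 0. -/
theorem stmt_4 (m : ℕ) (lam dbar VT : ℝ) (hlam : 0 < lam) (hdbar : 0 < dbar)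
    (hVT : 0 < VT)
    (ts : ℕ → ℝ) (hmono : StrictMono ts) (hts0 : ts 0 = 0)
    (hunbdd : Filter.Tendsto ts Filter.atTop Filter.atTop)
    (A : EuclideanSpace ℝ (Fin m) →L[ℝ] EuclideanSpace ℝ (Fin m))
    (hA : ∀ x, ‖A x‖ ≤ lam * ‖x‖)
    (e d : ℝ → EuclideanSpace ℝ (Fin m))
    (hd : ∀ t, 0 ≤ t → ‖d t‖ ≤ dbar)
    (h0 : ∀ s : ℕ, e (ts s) = 0)
    (hder : ∀ s : ℕ, ∀ t ∈ Set.Ico (ts s) (ts (s + 1)),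
      HasDerivWithinAt e (A (e t) - d t) (Set.Ico (ts s) (ts (s + 1))) t)
    (hdwell : ∀ s : ℕ, ts (s + 1) - ts s ≤ 1 / lam * Real.log (lam * VT / dbar + 1)) :
    ∀ t, 0 ≤ t → ‖e t‖ ≤ VT := by
  intro t ht
  -- find s with ts s ≤ t < ts (s+1)
  have hex : ∃ n, t < ts n := by
    rcases (Filter.tendsto_atTop.1 hunbdd (t + 1)).exists with ⟨n, hn⟩
    exact ⟨n, by linarith⟩
  classical
  have hNpos : 0 < Nat.find hex := by
    rcases Nat.eq_zero_or_pos (Nat.find hex) with h | h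
    · exfalso
      have := Nat.find_spec hex
      rw [h, hts0] at this; linarith
    · exact h
  obtain ⟨s, hNs⟩ : ∃ s, Nat.find hex = s + 1 :=
    ⟨Nat.find hex - 1, (Nat.succ_pred_eq_of_pos hNpos).symm⟩
  have hNlt : t < ts (s + 1) := by
    have := Nat.find_spec hex; rwa [hNs] at this
  have hle : ts s ≤ t := by
    by_contra h
    exact Nat.find_min hex (by omega) (lt_of_not_ge h)
  have htIco : t ∈ Set.Ico (ts s) (ts (s + 1)) := ⟨hle, hNlt⟩
  have hts_nonneg : 0 ≤ ts s := by
    rw [← hts0]; exact hmono.monotone (Nat.zero_le s)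
  -- continuity on Icc (ts s) t
  have hsub : Set.Icc (ts s) t ⊆ Set.Ico (ts s) (ts (s + 1)) := fun x hx =>
    ⟨hx.1, lt_of_le_of_lt hx.2 hNlt⟩
  have hcont : ContinuousOn e (Set.Icc (ts s) t) := fun x hx =>
    ((hder s x (hsub hx)).continuousWithinAt).mono hsub
  have hder' : ∀ x ∈ Set.Ico (ts s) t,
      HasDerivWithinAt e (A (e x) - d x) (Set.Ici x) x := by
    intro x hx
    have hxI : x ∈ Set.Ico (ts s) (ts (s + 1)) := ⟨hx.1, lt_trans hx.2 hNlt⟩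
    refine (hder s x hxI).mono_of_mem_nhdsWithin ?_
    refine mem_nhdsWithin.2 ⟨Set.Iio (ts (s + 1)), isOpen_Iio, hxI.2, ?_⟩
    rintro y ⟨hy1, hy2⟩
    exact ⟨le_trans hxI.1 hy2, hy1⟩
  have hbound : ∀ x ∈ Set.Ico (ts s) t, ‖A (e x) - d x‖ ≤ lam * ‖e x‖ + dbar := by
    intro x hx
    calc ‖A (e x) - d x‖ ≤ ‖A (e x)‖ + ‖d x‖ := norm_sub_le _ _
      _ ≤ lam * ‖e x‖ + dbar := add_le_add (hA _) (hd x (le_trans hts_nonneg hx.1))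
  have ha : ‖e (ts s)‖ ≤ 0 := by rw [h0 s]; simp
  have key := norm_le_gronwallBound_of_norm_deriv_right_le hcont hder' ha hbound t
    ⟨hle, le_refl t⟩
  rw [gronwallBound_of_K_ne_0 (ne_of_gt hlam)] at key
  simp only [zero_mul, zero_add] at key
  -- now: ‖e t‖ ≤ dbar / lam * (exp (lam * (t - ts s)) - 1)
  have hdt : t - ts s ≤ 1 / lam * Real.log (lam * VT / dbar + 1) := by
    have := hdwell s
    linarith [hNlt.le]
  have hlog : lam * (t - ts s) ≤ Real.log (lam * VT / dbar + 1) := by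
    rw [div_mul_eq_mul_div, one_mul] at hdt
    calc lam * (t - ts s) ≤ lam * (Real.log (lam * VT / dbar + 1) / lam) :=
      mul_le_mul_of_nonneg_left hdt hlam.le
      _ = Real.log (lam * VT / dbar + 1) := by field_simp
  have hpos : (0:ℝ) < lam * VT / dbar + 1 := by positivity
  have hexp : Real.exp (lam * (t - ts s)) ≤ lam * VT / dbar + 1 := by
    calc Real.exp (lam * (t - ts s)) ≤ Real.exp (Real.log (lam * VT / dbar + 1)) :=
      Real.exp_le_exp.2 hlog
      _ = lam * VT / dbar + 1 := Real.exp_log hpos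
  calc ‖e t‖ ≤ dbar / lam * (Real.exp (lam * (t - ts s)) - 1) := key
    _ ≤ dbar / lam * (lam * VT / dbar) := by
        apply mul_le_mul_of_nonneg_left _ (by positivity)
        linarith
    _ = VT := by field_simp
end
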